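/- arXiv:1906.03756 — 7 statements merged into one kernel-verified Lean document; each statement's English description precedes it below -/
import Mathlib

section
/- (Archimedes, On Conoids and Spheroids 11(1).) The section of a paraboloid of revolution by a plane parallel to its axis is a parabola congruent to the meridian parabola: for N > 0 and any k ∈ ℝ, the intersection of S = {(x, y, z) ∈ ℝ³ : x² + y² = N·z} with the plane {y = k} equals the image of the meridian section S ∩ {y = 0} = {(x, 0, z) : x² = N·z} under the translation of ℝ³ by the vector (0, k, k²/N). -/
/-- Archimedes, On Conoids and Spheroids 11(1): the section of the paraboloid of
revolution `x² + y² = N·z` by the plane `{y = k}` (parallel to the axis) equals the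
image of the meridian section `S ∩ {y = 0}` under the translation by `(0, k, k²/N)`. -/
theorem paraboloid_section_parallel_axis (N k : ℝ) (hN : 0 < N) :
    {p : ℝ × ℝ × ℝ | p.1 ^ 2 + p.2.1 ^ 2 = N * p.2.2} ∩ {p : ℝ × ℝ × ℝ | p.2.1 = k} =
      (fun p : ℝ × ℝ × ℝ => p + (0, k, k ^ 2 / N)) ''
        ({p : ℝ × ℝ × ℝ | p.1 ^ 2 + p.2.1 ^ 2 = N * p.2.2} ∩
          {p : ℝ × ℝ × ℝ | p.2.1 = 0}) := by
  ext ⟨x, y, z⟩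
  simp only [Set.mem_inter_iff, Set.mem_setOf_eq, Set.mem_image, Prod.mk.injEq,
    Prod.ext_iff, Prod.exists]
  constructor
  · rintro ⟨h, hy⟩
    subst hy
    refine ⟨x, 0, z - y ^ 2 / N, ⟨?_, rfl⟩, ?_, ?_, ?_⟩ <;>
      simp [Prod.ext_iff] <;> field_simp <;> linarith
  · rintro ⟨a, b, c, ⟨h, rfl⟩, h1, h2, h3⟩
    simp at h1 h2 h3
    subst h1; subst h2; subst h3
    constructor
    · field_simp
      ring_nf
      ring_nf at h
      linarith
    · simp
end

section
/- (Archimedes, On Conoids and Spheroids 12.) The section of a paraboloid of revolution by a plane that is neither parallel nor perpendicular to the axis is an ellipse whose major axis lies in the plane through the axis at right angles to the cutting plane: let N > 0, m ≠ 0, c ∈ ℝ with r² := N·c + N²·m²/4 > 0 and r > 0. Set P₀ = (N·m/2, 0, N·m²/2 + c), u = (1/√(1+m²), 0, m/√(1+m²)), v = (0, 1, 0). Then the intersection of S = {(x, y, z) ∈ ℝ³ : x² + y² = N·z} with the plane {(x, y, z) : z = m·x + c} equals the set { P₀ + (r·√(1+m²)·cos θ) • u + (r·sin θ) • v : θ ∈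 ℝ }, an ellipse with orthonormal in-plane axes u, v, semi-major axis r·√(1+m²) in the plane {y = 0}, and semi-minor axis r, with r·√(1+m²) > r. -/
/-!
On the cutting plane `z = m x + c` the equation `x² + y² = N z` of the paraboloid becomes
`(x - N m / 2)² + y² = r²`, so the section projects onto a circle of radius `r` in the
`xy`-plane. Lifting that circle back to the plane stretches it by `√(1 + m²)` along the
line of steepest slope, which gives the ellipse.
-/

open Real

lemma exists_eq_mul_cos_and_eq_mul_sin {a b r : ℝ} (hr : 0 ≤ r) (h : a ^ 2 + b ^ 2 = r ^ 2) :
    ∃ θ : ℝ, a = r * cos θ ∧ b = r * sin θ := by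
  have hnorm : ‖(⟨a, b⟩ : ℂ)‖ = r := by
    rw [Complex.norm_def, Complex.normSq_mk, ← sq, ← sq, h, sqrt_sq hr]
  refine ⟨Complex.arg ⟨a, b⟩, ?_, ?_⟩
  · simpa [hnorm] using (Complex.norm_mul_cos_arg ⟨a, b⟩).symm
  · simpa [hnorm] using (Complex.norm_mul_sin_arg ⟨a, b⟩).symm

lemma sq_add_sq_eq_mul_iff_of_eq_mul_add {N m c x y z : ℝ} (hz : z = m * x + c) :
    x ^ 2 + y ^ 2 = N * z ↔ (x - N * m / 2) ^ 2 + y ^ 2 = N * c + N ^ 2 * m ^ 2 / 4 := by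
  subst hz
  constructor <;> intro h <;> linarith

lemma ellipse_point_eq (N m c r θ : ℝ) :
    ((N * m / 2, 0, N * m ^ 2 / 2 + c) : ℝ × ℝ × ℝ) +
        (r * √(1 + m ^ 2) * cos θ) • ((1 / √(1 + m ^ 2), 0, m / √(1 + m ^ 2)) : ℝ × ℝ × ℝ) +
        (r * sin θ) • (((0 : ℝ), (1 : ℝ), (0 : ℝ)) : ℝ × ℝ × ℝ) =
      (N * m / 2 + r * cos θ, r * sin θ, m * (N * m / 2 + r * cos θ) + c) := by
  have hs : √(1 + m ^ 2) ≠ 0 := (sqrt_pos.mpr (by positivity)).ne'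
  simp only [Prod.smul_mk, smul_eq_mul, Prod.mk_add_mk, Prod.mk.injEq]
  refine ⟨?_, by ring, ?_⟩ <;> field_simp <;> ring

lemma lt_mul_sqrt_one_add_sq {r m : ℝ} (hr : 0 < r) (hm : m ≠ 0) :
    r < r * √(1 + m ^ 2) := by
  have h : 1 < √(1 + m ^ 2) := by
    rw [lt_sqrt zero_le_one]
    linarith [sq_pos_of_ne_zero hm]
  exact lt_mul_of_one_lt_right hr h

theorem paraboloid_oblique_section_is_ellipse_general (N m c r : ℝ) (hm : m ≠ 0)
    (hr : 0 < r) (hr2 : r ^ 2 = N * c + N ^ 2 * m ^ 2 / 4) :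
    ({p : ℝ × ℝ × ℝ | p.1 ^ 2 + p.2.1 ^ 2 = N * p.2.2} ∩
        {p : ℝ × ℝ × ℝ | p.2.2 = m * p.1 + c} =
      {q : ℝ × ℝ × ℝ | ∃ θ : ℝ,
        q = ((N * m / 2, 0, N * m ^ 2 / 2 + c) : ℝ × ℝ × ℝ) +
            (r * Real.sqrt (1 + m ^ 2) * Real.cos θ) •
              ((1 / Real.sqrt (1 + m ^ 2), 0, m / Real.sqrt (1 + m ^ 2)) : ℝ × ℝ × ℝ) +
            (r * Real.sin θ) • (((0 : ℝ), (1 : ℝ), (0 : ℝ)) : ℝ × ℝ × ℝ)}) ∧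
    r * Real.sqrt (1 + m ^ 2) > r := by
  refine ⟨?_, lt_mul_sqrt_one_add_sq hr hm⟩
  ext ⟨x, y, z⟩
  simp only [Set.mem_inter_iff, Set.mem_ofPred_eq, ellipse_point_eq, Prod.mk.injEq]
  constructor
  · rintro ⟨hpar, hz⟩
    rw [sq_add_sq_eq_mul_iff_of_eq_mul_add hz, ← hr2] at hpar
    obtain ⟨θ, hx, hy⟩ := exists_eq_mul_cos_and_eq_mul_sin hr.le hpar
    have hx' : x = N * m / 2 + r * cos θ := by linarith
    exact ⟨θ, hx', hy, by rw [hz, hx']⟩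
  · rintro ⟨θ, hx, hy, hz⟩
    have hz' : z = m * x + c := by rw [hz, hx]
    refine ⟨(sq_add_sq_eq_mul_iff_of_eq_mul_add hz').2 ?_, hz'⟩
    rw [← hr2, hx, hy]
    linear_combination r ^ 2 * cos_sq_add_sin_sq θ

/-- Archimedes, On Conoids and Spheroids 12: the section of the paraboloid of revolution
`x² + y² = N·z` by an oblique plane `{z = m·x + c}` (with `m ≠ 0`) is an ellipse with
center `P₀ = (N·m/2, 0, N·m²/2 + c)`, orthonormal in-plane axes
`u = (1/√(1+m²), 0, m/√(1+m²))` and `v = (0, 1, 0)`, semi-major axis `r·√(1+m²)`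
(lying in the plane `{y = 0}`) and semi-minor axis `r`, where `r² = N·c + N²·m²/4`;
moreover `r·√(1+m²) > r`. -/
theorem paraboloid_oblique_section_is_ellipse (N m c r : ℝ) (hN : 0 < N) (hm : m ≠ 0)
    (hr : 0 < r) (hr2 : r ^ 2 = N * c + N ^ 2 * m ^ 2 / 4) :
    ({p : ℝ × ℝ × ℝ | p.1 ^ 2 + p.2.1 ^ 2 = N * p.2.2} ∩
        {p : ℝ × ℝ × ℝ | p.2.2 = m * p.1 + c} =
      {q : ℝ × ℝ × ℝ | ∃ θ : ℝ,
        q = ((N * m / 2, 0, N * m ^ 2 / 2 + c) : ℝ × ℝ × ℝ) +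
            (r * Real.sqrt (1 + m ^ 2) * Real.cos θ) •
              ((1 / Real.sqrt (1 + m ^ 2), 0, m / Real.sqrt (1 + m ^ 2)) : ℝ × ℝ × ℝ) +
            (r * Real.sin θ) • (((0 : ℝ), (1 : ℝ), (0 : ℝ)) : ℝ × ℝ × ℝ)}) ∧
    r * Real.sqrt (1 + m ^ 2) > r :=
  paraboloid_oblique_section_is_ellipse_general N m c r hm hr hr2
end

section
/- (Archimedes, On Conoids and Spheroids 15(3).) If a plane meets a paraboloid of revolution without cutting it, it meets it in exactly one point: let N > 0 and S = {(x, y, z) ∈ ℝ³ : x² + y² = N·z}. Let f : ℝ³ → ℝ be a nonzero linear functional and d ∈ ℝ, and let P = {p ∈ ℝ³ : f(p) = d}. If P ∩ S is nonempty and f(p) ≤ d for every p ∈ S (i.e., S lies in one closed half-space bounded by P), then P ∩ S is a singleton. -/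
/-- Archimedes, On Conoids and Spheroids 15(3): if a plane meets the paraboloid of
revolution `x² + y² = N·z` without cutting it (the paraboloid lies in one closed
half-space bounded by the plane, and the intersection is nonempty), then the plane meets
the paraboloid in exactly one point. -/
theorem paraboloid_tangent_plane_unique_point (N : ℝ) (hN : 0 < N)
    (f : (ℝ × ℝ × ℝ) →ₗ[ℝ] ℝ) (hf : f ≠ 0) (d : ℝ)
    (hne : ({p : ℝ × ℝ × ℝ | f p = d} ∩
      {p : ℝ × ℝ × ℝ | p.1 ^ 2 + p.2.1 ^ 2 = N * p.2.2}).Nonempty)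
    (hside : ∀ p : ℝ × ℝ × ℝ, p.1 ^ 2 + p.2.1 ^ 2 = N * p.2.2 → f p ≤ d) :
    ∃ q : ℝ × ℝ × ℝ, {p : ℝ × ℝ × ℝ | f p = d} ∩
      {p : ℝ × ℝ × ℝ | p.1 ^ 2 + p.2.1 ^ 2 = N * p.2.2} = {q} := by
  have hN0 : N ≠ 0 := ne_of_gt hN
  set a : ℝ := f (1, 0, 0) with ha
  set b : ℝ := f (0, 1, 0) with hb
  set c : ℝ := f (0, 0, 1) with hc
  have hfp : ∀ p : ℝ × ℝ × ℝ, f p = a * p.1 + b * p.2.1 + c * p.2.2 := by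
    intro p
    have hdec : p = p.1 • ((1:ℝ), (0:ℝ), (0:ℝ)) + p.2.1 • ((0:ℝ), (1:ℝ), (0:ℝ))
        + p.2.2 • ((0:ℝ), (0:ℝ), (1:ℝ)) := by
      simp [Prod.ext_iff]
    conv_lhs => rw [hdec]
    simp only [map_add, map_smul, smul_eq_mul]
    rw [← ha, ← hb, ← hc]; ring
  have hpar : ∀ x y : ℝ, x ^ 2 + y ^ 2 = N * ((x ^ 2 + y ^ 2) / N) := by
    intro x y; field_simp
  have hg : ∀ x y : ℝ, a * x + b * y + c * ((x ^ 2 + y ^ 2) / N) ≤ d := by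
    intro x y
    have := hside (x, y, (x ^ 2 + y ^ 2) / N) (hpar x y)
    rwa [hfp] at this
  -- c < 0
  have hclt : c < 0 := by
    rcases lt_trichotomy c 0 with h | h | h
    · exact h
    · -- c = 0 : then a = b = 0, so f = 0, contradiction
      exfalso
      have hlin : ∀ e : ℝ, (∀ x : ℝ, e * x ≤ d) → e = 0 := by
        intro e he
        by_contra he0
        have := he ((d + 1) / e)
        rw [mul_div_cancel₀ _ he0] at this
        linarith
      have haz : a = 0 := by
        refine hlin a (fun x => ?_)
        have := hg x 0
        simpa [h] using this
      have hbz : b = 0 := by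
        refine hlin b (fun y => ?_)
        have := hg 0 y
        simpa [h] using this
      apply hf
      apply LinearMap.ext
      intro p
      rw [hfp p, haz, hbz, h]
      simp
    · -- c > 0 : take x large
      exfalso
      have key : ∀ x : ℝ, a * x + c * (x ^ 2 / N) ≤ d := by
        intro x; have := hg x 0; simpa using this
      -- use x = t and x = -t to kill the linear term
      have key2 : ∀ t : ℝ, c * (t ^ 2 / N) ≤ d := by
        intro t
        have h1 := key t
        have h2 := key (-t)
        have e : (-t) ^ 2 = t ^ 2 := by ring
        rw [e] at h2
        linarith
      set t : ℝ := Real.sqrt ((|d| + 1) * N / c) with ht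
      have ht2 : t ^ 2 = (|d| + 1) * N / c := by
        rw [ht, Real.sq_sqrt]
        positivity
      have := key2 t
      rw [ht2] at this
      have hcd : c * ((|d| + 1) * N / c / N) = |d| + 1 := by
        field_simp
      rw [hcd] at this
      have := abs_nonneg d
      have := le_abs_self d
      linarith
  have hcn : c ≠ 0 := ne_of_lt hclt
  set x0 : ℝ := -a * N / (2 * c) with hx0
  set y0 : ℝ := -b * N / (2 * c) with hy0
  set m : ℝ := -(a ^ 2 + b ^ 2) * N / (4 * c) with hm
  -- completing the square
  have key : ∀ p : ℝ × ℝ × ℝ, p.1 ^ 2 + p.2.1 ^ 2 = N * p.2.2 →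
      f p = m + (c / N) * ((p.1 - x0) ^ 2 + (p.2.1 - y0) ^ 2) := by
    intro p hp
    have hz : p.2.2 = (p.1 ^ 2 + p.2.1 ^ 2) / N := by
      field_simp
      linarith [hp]
    rw [hfp p, hz, hm, hx0, hy0]
    field_simp
    ring
  set q : ℝ × ℝ × ℝ := (x0, y0, (x0 ^ 2 + y0 ^ 2) / N) with hq
  have hqS : q.1 ^ 2 + q.2.1 ^ 2 = N * q.2.2 := hpar x0 y0
  have hfq : f q = m := by
    rw [key q hqS]
    have hz : (q.1 - x0) ^ 2 + (q.2.1 - y0) ^ 2 = 0 := by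
      rw [hq]; ring
    rw [hz]; ring
  -- d = m
  have hmd : m ≤ d := by
    rw [← hfq]; exact hside q hqS
  have hdm : d ≤ m := by
    obtain ⟨p, hp1, hp2⟩ := hne
    have hk := key p hp2
    rw [hp1] at hk
    have hsq : (0:ℝ) ≤ (p.1 - x0) ^ 2 + (p.2.1 - y0) ^ 2 := by positivity
    have hcN : c / N < 0 := div_neg_of_neg_of_pos hclt hN
    nlinarith
  have hdm' : d = m := le_antisymm hdm hmd
  refine ⟨q, ?_⟩
  ext p
  simp only [Set.mem_inter_iff, Set.mem_setOf_eq, Set.mem_singleton_iff]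
  constructor
  · rintro ⟨hp1, hp2⟩
    have hk := key p hp2
    rw [hp1, hdm'] at hk
    have hcN : c / N < 0 := div_neg_of_neg_of_pos hclt hN
    have hsum : (p.1 - x0) ^ 2 + (p.2.1 - y0) ^ 2 = 0 := by
      rcases (mul_eq_zero.mp (by linarith : (c / N) * ((p.1 - x0) ^ 2 + (p.2.1 - y0) ^ 2) = 0)) with h | h
      · exact absurd h (ne_of_lt hcN)
      · exact h
    have hA := sq_nonneg (p.1 - x0)
    have hB := sq_nonneg (p.2.1 - y0)
    have hA0 : (p.1 - x0) ^ 2 = 0 := by linarith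
    have hB0 : (p.2.1 - y0) ^ 2 = 0 := by linarith
    have h1 : p.1 = x0 := sub_eq_zero.mp (pow_eq_zero_iff two_ne_zero |>.mp hA0)
    have h2 : p.2.1 = y0 := sub_eq_zero.mp (pow_eq_zero_iff two_ne_zero |>.mp hB0)
    have h3 : p.2.2 = (x0 ^ 2 + y0 ^ 2) / N := by
      rw [h1, h2] at hp2
      field_simp
      linarith [hp2]
    exact Prod.ext h1 (Prod.ext h2 h3)
  · rintro rfl
    exact ⟨hfq.trans hdm'.symm, hqS⟩
end

section
/- (Archimedes, On Conoids and Spheroids 11(2).) The section of a hyperboloid of revolution by a plane parallel to the axis is a hyperbola similar to the meridian hyperbola: let a, b > 0 and S = {(x, y, z) ∈ ℝ³ : z²/a² − (x² + y²)/b² = 1}. For any k ∈ ℝ, the intersection S ∩ {x = k} equals {(k, y, z) : z²/a² − y²/b² = 1 + k²/b²}, and the plane curve {(y, z) ∈ ℝ² : z²/a² − y²/b² = 1 + k²/b²} is the image of the meridian hyperbola {(y, z) ∈ ℝ² : z²/a² − y²/b² = 1} under the homothety of the plane centered at the origin with ratio √(1 + k²/b²). -/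
/-- Archimedes, On Conoids and Spheroids 11(2): the section of the hyperboloid of
revolution `z²/a² − (x² + y²)/b² = 1` by the plane `{x = k}` (parallel to the axis) is
the hyperbola `z²/a² − y²/b² = 1 + k²/b²`, and this plane curve is the image of the
meridian hyperbola `z²/a² − y²/b² = 1` under the homothety of the plane centered at the
origin with ratio `√(1 + k²/b²)`. -/
theorem hyperboloid_section_parallel_axis (a b k : ℝ) (ha : 0 < a) (hb : 0 < b) :
    ({p : ℝ × ℝ × ℝ | p.2.2 ^ 2 / a ^ 2 - (p.1 ^ 2 + p.2.1 ^ 2) / b ^ 2 = 1} ∩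
        {p : ℝ × ℝ × ℝ | p.1 = k} =
      {p : ℝ × ℝ × ℝ | p.1 = k ∧
        p.2.2 ^ 2 / a ^ 2 - p.2.1 ^ 2 / b ^ 2 = 1 + k ^ 2 / b ^ 2}) ∧
    ({q : ℝ × ℝ | q.2 ^ 2 / a ^ 2 - q.1 ^ 2 / b ^ 2 = 1 + k ^ 2 / b ^ 2} =
      (fun v : ℝ × ℝ => Real.sqrt (1 + k ^ 2 / b ^ 2) • v) ''
        {q : ℝ × ℝ | q.2 ^ 2 / a ^ 2 - q.1 ^ 2 / b ^ 2 = 1}) := by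
  have ha2 : (a : ℝ) ^ 2 ≠ 0 := by positivity
  have hb2 : (b : ℝ) ^ 2 ≠ 0 := by positivity
  have hc : 0 < 1 + k ^ 2 / b ^ 2 := by positivity
  have hsq : Real.sqrt (1 + k ^ 2 / b ^ 2) ^ 2 = 1 + k ^ 2 / b ^ 2 :=
    Real.sq_sqrt hc.le
  have hs : 0 < Real.sqrt (1 + k ^ 2 / b ^ 2) := Real.sqrt_pos.2 hc
  constructor
  · ext ⟨x, y, z⟩
    simp only [Set.mem_inter_iff, Set.mem_setOf_eq]
    constructor
    · rintro ⟨h1, rfl⟩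
      refine ⟨rfl, ?_⟩
      rw [add_div] at h1
      linarith
    · rintro ⟨rfl, h1⟩
      refine ⟨?_, rfl⟩
      rw [add_div]
      linarith
  · ext ⟨y, z⟩
    simp only [Set.mem_setOf_eq, Set.mem_image, Prod.exists, Prod.smul_mk, smul_eq_mul,
      Prod.mk.injEq]
    constructor
    · intro h
      refine ⟨y / Real.sqrt (1 + k ^ 2 / b ^ 2), z / Real.sqrt (1 + k ^ 2 / b ^ 2), ?_, ?_, ?_⟩
      · rw [div_pow, div_pow, hsq, div_div, div_div, mul_comm (1+k^2/b^2) (a^2), mul_comm (1+k^2/b^2) (b^2),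
          ← div_div, ← div_div, ← sub_div, h, div_self hc.ne']
      · field_simp
      · field_simp
    · rintro ⟨u, v, h, rfl, rfl⟩
      rw [mul_pow, mul_pow, hsq, mul_div_assoc, mul_div_assoc, ← mul_sub, h, mul_one]
end

section
/- (Archimedes, On Conoids and Spheroids 13.) The section of a hyperboloid of revolution by a plane meeting all the generators of the asymptotic cone and not perpendicular to the axis is an ellipse whose major axis lies in the plane through the axis at right angles to the cutting plane: let a, b > 0, m ≠ 0 with m²·b² < a², and c ∈ ℝ. Set λ = 1/b² − m²/a² (so λ > 0), x₀ = m·c/(a²·λ), and ρ = c²/a² − 1 + m²·c²/(a⁴·λ), and assume ρ > 0. Set P₀ = (x₀, 0, m·x₀ + c), u = (1/√(1+m²), 0, m/√(1+m²)), v = (0, 1, 0), A = √(ρ·(1+m²)/λ), B = b·√ρ. Then the intersection of S = {(x, y, z) ∈ ℝ³ : z²/a² − (x² + y²)/b² = 1} with the plane {z = m·x + c} equals {P₀ + (A cos θ) • u + (B sin θ) • v : θ ∈ ℝ}, an ellipse with orthonormal in-plane axes u, v and semi-axes A and B satisfying A > B, the major axis lying in the plane {y = 0}. -/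
/-!
Substituting `z = m x + c` and completing the square in `x` turns the hyperboloid equation
into `λ (x - x₀)² + y² / b² = ρ`. Along `u` the plane is scaled by `√(1 + m²)` against the
`x`-axis, so in the coordinates `(√(1 + m²) (x - x₀), y)` of the plane this is the ellipse with
semi-axes `A` and `B`, which the cosine–sine parametrisation covers. Finally `A > B` because
`b² λ ≤ 1 < 1 + m²`.
-/

open Real

lemma exists_cos_sin_eq_of_sq_add_sq_eq_one {x y : ℝ} (h : x ^ 2 + y ^ 2 = 1) :
    ∃ θ : ℝ, cos θ = x ∧ sin θ = y := by
  have hnorm : ‖(⟨x, y⟩ : ℂ)‖ = 1 := by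
    rw [Complex.norm_def, Complex.normSq_mk, ← sq, ← sq, h, Real.sqrt_one]
  refine ⟨Complex.arg ⟨x, y⟩, ?_, ?_⟩
  · simpa [hnorm] using Complex.norm_mul_cos_arg ⟨x, y⟩
  · simpa [hnorm] using Complex.norm_mul_sin_arg ⟨x, y⟩

lemma exists_mul_cos_mul_sin_iff {A B X Y : ℝ} (hA : A ≠ 0) (hB : B ≠ 0) :
    (∃ θ : ℝ, A * cos θ = X ∧ B * sin θ = Y) ↔ (X / A) ^ 2 + (Y / B) ^ 2 = 1 := by
  constructor
  · rintro ⟨θ, rfl, rfl⟩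
    rw [mul_div_cancel_left₀ _ hA, mul_div_cancel_left₀ _ hB, cos_sq_add_sin_sq]
  · intro h
    obtain ⟨θ, hcos, hsin⟩ := exists_cos_sin_eq_of_sq_add_sq_eq_one h
    exact ⟨θ, by rw [hcos, mul_div_cancel₀ _ hA], by rw [hsin, mul_div_cancel₀ _ hB]⟩

lemma one_div_sq_sub_div_sq_pos {a b m : ℝ} (hb : b ≠ 0) (hmb : m ^ 2 * b ^ 2 < a ^ 2) :
    0 < 1 / b ^ 2 - m ^ 2 / a ^ 2 := by
  have hb2 : 0 < b ^ 2 := by positivity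
  have ha2 : 0 < a ^ 2 := by nlinarith [sq_nonneg m]
  rw [sub_pos, div_lt_div_iff₀ ha2 hb2]
  linarith

lemma hyperboloid_eq_one_iff_of_mem_plane {a b m c lam x₀ ρ : ℝ} (x y : ℝ)
    (hlam : lam = 1 / b ^ 2 - m ^ 2 / a ^ 2) (hlam₀ : lam ≠ 0)
    (hx₀ : x₀ = m * c / (a ^ 2 * lam))
    (hρ : ρ = c ^ 2 / a ^ 2 - 1 + m ^ 2 * c ^ 2 / (a ^ 4 * lam)) :
    (m * x + c) ^ 2 / a ^ 2 - (x ^ 2 + y ^ 2) / b ^ 2 = 1 ↔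
      lam * (x - x₀) ^ 2 + y ^ 2 / b ^ 2 = ρ := by
  have completed_square : (m * x + c) ^ 2 / a ^ 2 - (x ^ 2 + y ^ 2) / b ^ 2 - 1 =
      ρ - (lam * (x - x₀) ^ 2 + y ^ 2 / b ^ 2) := by
    subst hx₀ hρ
    field_simp
    rw [hlam]
    ring
  constructor <;> intro h <;> linarith

lemma eq_plane_point_iff {m c x₀ s t w x y z : ℝ} (hs : s ≠ 0) :
    ((x, y, z) : ℝ × ℝ × ℝ) =
        ((x₀, 0, m * x₀ + c) : ℝ × ℝ × ℝ) + t • ((1 / s, 0, m / s) : ℝ × ℝ × ℝ) +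
          w • (((0 : ℝ), (1 : ℝ), (0 : ℝ)) : ℝ × ℝ × ℝ) ↔
      z = m * x + c ∧ t = s * (x - x₀) ∧ w = y := by
  simp only [Prod.smul_mk, Prod.mk_add_mk, Prod.mk.injEq, smul_eq_mul]
  constructor
  · rintro ⟨rfl, rfl, rfl⟩
    refine ⟨by ring, by field_simp; ring, by ring⟩
  · rintro ⟨rfl, rfl, rfl⟩
    refine ⟨by field_simp; ring, by ring, by field_simp; ring⟩

lemma ellipse_semiAxes_normal_form_iff {m b lam ρ X Y : ℝ} (hb : b ≠ 0) (hlam : 0 < lam)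
    (hρ : 0 < ρ) :
    (√(1 + m ^ 2) * X / √(ρ * (1 + m ^ 2) / lam)) ^ 2 + (Y / (b * √ρ)) ^ 2 = 1 ↔
      lam * X ^ 2 + Y ^ 2 / b ^ 2 = ρ := by
  have hm : 0 < 1 + m ^ 2 := by positivity
  rw [div_pow, div_pow, mul_pow, mul_pow, sq_sqrt hm.le, sq_sqrt (by positivity),
    sq_sqrt hρ.le]
  constructor <;> intro h <;> field_simp at h ⊢ <;> linarith

lemma mul_sqrt_lt_sqrt_div {a b m lam ρ : ℝ} (hb : 0 < b) (hm : m ≠ 0)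
    (hlam : lam = 1 / b ^ 2 - m ^ 2 / a ^ 2) (hlam₀ : 0 < lam) (hρ : 0 < ρ) :
    b * √ρ < √(ρ * (1 + m ^ 2) / lam) := by
  have hb_lam : b ^ 2 * lam ≤ 1 := by
    rw [hlam, mul_sub, mul_one_div_cancel (by positivity)]
    have : 0 ≤ b ^ 2 * (m ^ 2 / a ^ 2) := by positivity
    linarith
  rw [← sqrt_sq hb.le, ← sqrt_mul (sq_nonneg b)]
  apply sqrt_lt_sqrt (by positivity)
  rw [lt_div_iff₀ hlam₀]
  have : 0 < m ^ 2 := by positivity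
  nlinarith

theorem hyperboloid_oblique_section_is_ellipse_general (a b m c lam x₀ ρ A B : ℝ)
    (hb : 0 < b) (hm : m ≠ 0) (hmb : m ^ 2 * b ^ 2 < a ^ 2)
    (hlam : lam = 1 / b ^ 2 - m ^ 2 / a ^ 2)
    (hx₀ : x₀ = m * c / (a ^ 2 * lam))
    (hρ : ρ = c ^ 2 / a ^ 2 - 1 + m ^ 2 * c ^ 2 / (a ^ 4 * lam))
    (hρpos : 0 < ρ)
    (hA : A = Real.sqrt (ρ * (1 + m ^ 2) / lam))
    (hB : B = b * Real.sqrt ρ) :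
    0 < lam ∧
    ({p : ℝ × ℝ × ℝ | p.2.2 ^ 2 / a ^ 2 - (p.1 ^ 2 + p.2.1 ^ 2) / b ^ 2 = 1} ∩
        {p : ℝ × ℝ × ℝ | p.2.2 = m * p.1 + c} =
      {q : ℝ × ℝ × ℝ | ∃ θ : ℝ,
        q = ((x₀, 0, m * x₀ + c) : ℝ × ℝ × ℝ) +
            (A * Real.cos θ) •
              ((1 / Real.sqrt (1 + m ^ 2), 0, m / Real.sqrt (1 + m ^ 2)) : ℝ × ℝ × ℝ) +
            (B * Real.sin θ) • (((0 : ℝ), (1 : ℝ), (0 : ℝ)) : ℝ × ℝ × ℝ)}) ∧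
    A > B := by
  have hlam_pos : 0 < lam := hlam ▸ one_div_sq_sub_div_sq_pos hb.ne' hmb
  have hA_pos : 0 < A := by rw [hA]; positivity
  have hB_pos : 0 < B := by rw [hB]; positivity
  refine ⟨hlam_pos, ?_, by rw [hA, hB]; exact mul_sqrt_lt_sqrt_div hb hm hlam hlam_pos hρpos⟩
  ext ⟨x, y, z⟩
  simp only [Set.mem_inter_iff, Set.mem_ofPred_eq,
    eq_plane_point_iff (sqrt_pos.mpr (by positivity : (0 : ℝ) < 1 + m ^ 2)).ne']
  rw [exists_and_left, and_comm, and_congr_right_iff]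
  rintro rfl
  rw [hyperboloid_eq_one_iff_of_mem_plane x y hlam hlam_pos.ne' hx₀ hρ,
    exists_mul_cos_mul_sin_iff hA_pos.ne' hB_pos.ne', hA, hB,
    ellipse_semiAxes_normal_form_iff hb.ne' hlam_pos hρpos]

/-- Archimedes, On Conoids and Spheroids 13: the section of the hyperboloid of
revolution `z²/a² − (x² + y²)/b² = 1` by a plane `{z = m·x + c}` meeting all the
generators of the asymptotic cone (`m²·b² < a²`) and not perpendicular to the axis
(`m ≠ 0`) is an ellipse with center `P₀ = (x₀, 0, m·x₀ + c)`, orthonormal in-plane axes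
`u = (1/√(1+m²), 0, m/√(1+m²))` and `v = (0, 1, 0)`, and semi-axes
`A = √(ρ·(1+m²)/λ) > B = b·√ρ`, the major axis lying in the plane `{y = 0}`. -/
theorem hyperboloid_oblique_section_is_ellipse (a b m c lam x₀ ρ A B : ℝ)
    (ha : 0 < a) (hb : 0 < b) (hm : m ≠ 0) (hmb : m ^ 2 * b ^ 2 < a ^ 2)
    (hlam : lam = 1 / b ^ 2 - m ^ 2 / a ^ 2)
    (hx₀ : x₀ = m * c / (a ^ 2 * lam))
    (hρ : ρ = c ^ 2 / a ^ 2 - 1 + m ^ 2 * c ^ 2 / (a ^ 4 * lam))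
    (hρpos : 0 < ρ)
    (hA : A = Real.sqrt (ρ * (1 + m ^ 2) / lam))
    (hB : B = b * Real.sqrt ρ) :
    0 < lam ∧
    ({p : ℝ × ℝ × ℝ | p.2.2 ^ 2 / a ^ 2 - (p.1 ^ 2 + p.2.1 ^ 2) / b ^ 2 = 1} ∩
        {p : ℝ × ℝ × ℝ | p.2.2 = m * p.1 + c} =
      {q : ℝ × ℝ × ℝ | ∃ θ : ℝ,
        q = ((x₀, 0, m * x₀ + c) : ℝ × ℝ × ℝ) +
            (A * Real.cos θ) •
              ((1 / Real.sqrt (1 + m ^ 2), 0, m / Real.sqrt (1 + m ^ 2)) : ℝ × ℝ × ℝ) +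
            (B * Real.sin θ) • (((0 : ℝ), (1 : ℝ), (0 : ℝ)) : ℝ × ℝ × ℝ)}) ∧
    A > B :=
  hyperboloid_oblique_section_is_ellipse_general a b m c lam x₀ ρ A B hb hm hmb hlam hx₀ hρ hρpos hA
    hB
end

section
/- (Monge.) The hyperboloid of one sheet is doubly ruled: for every point p of S = {(x, y, z) ∈ ℝ³ : x² + y² − z² = 1} there exist two linearly independent directions d₁, d₂ ∈ ℝ³ such that for every t ∈ ℝ and each i ∈ {1, 2}, the point p + t • dᵢ lies in S; i.e., through every point of S pass two distinct straight lines entirely contained in S. -/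
/-- Monge: the hyperboloid of one sheet `x² + y² − z² = 1` is doubly ruled: through
every point pass two straight lines, in linearly independent directions, entirely
contained in the surface. -/
theorem hyperboloid_one_sheet_doubly_ruled (p : ℝ × ℝ × ℝ)
    (hp : p.1 ^ 2 + p.2.1 ^ 2 - p.2.2 ^ 2 = 1) :
    ∃ d₁ d₂ : ℝ × ℝ × ℝ, LinearIndependent ℝ ![d₁, d₂] ∧
      (∀ t : ℝ, (p + t • d₁).1 ^ 2 + (p + t • d₁).2.1 ^ 2 - (p + t • d₁).2.2 ^ 2 = 1) ∧
      (∀ t : ℝ, (p + t • d₂).1 ^ 2 + (p + t • d₂).2.1 ^ 2 - (p + t • d₂).2.2 ^ 2 = 1) := by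
  obtain ⟨x, y, z⟩ := p
  simp only at hp ⊢
  refine ⟨(x*z - y, y*z + x, x^2 + y^2), (x*z + y, y*z - x, x^2 + y^2), ?_, ?_, ?_⟩
  · rw [LinearIndependent.pair_iff]
    intro s t hst
    have h1 : s * (x*z - y) + t * (x*z + y) = 0 := congrArg Prod.fst hst
    have h2 : s * (y*z + x) + t * (y*z - x) = 0 := congrArg (Prod.fst ∘ Prod.snd) hst
    have h3 : s * (x^2 + y^2) + t * (x^2 + y^2) = 0 := congrArg (Prod.snd ∘ Prod.snd) hst
    have hxy : x^2 + y^2 > 0 := by nlinarith [sq_nonneg z]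
    have hsum : s + t = 0 := by
      rcases mul_eq_zero.mp (show (s + t) * (x^2 + y^2) = 0 by linarith [h3]) with h | h
      · exact h
      · linarith
    have hy : (t - s) * y = 0 := by linear_combination h1 - x*z*hsum
    have hx : (s - t) * x = 0 := by linear_combination h2 - y*z*hsum
    have hd : (s - t)^2 * (x^2 + y^2) = 0 := by
      linear_combination (s-t)*x*hx - (s-t)*y*hy
    have hst2 : s - t = 0 := by
      rcases mul_eq_zero.mp hd with h | h
      · exact pow_eq_zero_iff (n := 2) (by norm_num) |>.mp h
      · linarith
    constructor <;> linarith
  · intro t; simp only [Prod.smul_mk, Prod.mk_add_mk, smul_eq_mul]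
    linear_combination (1 - t^2*(x^2+y^2)) * hp
  · intro t; simp only [Prod.smul_mk, Prod.mk_add_mk, smul_eq_mul]
    linear_combination (1 - t^2*(x^2+y^2)) * hp
end

section
/- (Monge–Hachette; the orthoptic/Monge sphere.) If three mutually perpendicular planes are tangent to an ellipsoid, their common point lies on the sphere centered at the center of the ellipsoid with radius √(a² + b² + c²): let a, b, c > 0 and E = {(x, y, z) ∈ ℝ³ : x²/a² + y²/b² + z²/c² = 1}. Let n₁, n₂, n₃ be an orthonormal basis of ℝ³, let d₁, d₂, d₃ ∈ ℝ, and suppose each plane Pᵢ = {v ∈ ℝ³ : ⟨v, nᵢ⟩ = dᵢ} intersects E in exactly one point. Then the unique common point m = d₁ • n₁ + d₂ • n₂ + d₃ • n₃ of the three planes satisfies ‖m‖² = a² + b² + c². -/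
/-!
A plane `⟪v, n⟫ = d` through a point `v` of the ellipsoid `∑ vᵢ² / aᵢ² = 1` meets it again in the
reflection of `v` through `t • diag(a²) n`, where `t = d / ∑ aᵢ² nᵢ²`. So if the plane is tangent,
`v` is that centre itself, and evaluating the quadratic form there gives `d² = ∑ aᵢ² nᵢ²`.
For an orthonormal basis `n₁, …, nₖ` the common point `m = ∑ d_k • n_k` then has
`‖m‖² = ∑ d_k² = ∑ᵢ aᵢ² ∑_k (n_k)ᵢ² = ∑ aᵢ²`, the inner sum being `1` by Parseval.
-/

open scoped RealInnerProductSpace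

theorem OrthonormalBasis.norm_sum_smul_sq {κ E : Type*} [Fintype κ] [NormedAddCommGroup E]
    [InnerProductSpace ℝ E] (b : OrthonormalBasis κ ℝ E) (d : κ → ℝ) :
    ‖∑ k, d k • b k‖ ^ 2 = ∑ k, d k ^ 2 := by
  simp_rw [← b.sum_sq_inner_right, b.orthonormal.inner_right_fintype]

namespace Ellipsoid

variable {ι : Type*} [Fintype ι]

noncomputable def form (a : ι → ℝ) (v : EuclideanSpace ℝ ι) : ℝ := ∑ i, v i ^ 2 / a i ^ 2

/-- For a unit vector `n`, `√(supportSq a n)` is the distance from the centre to the two tangent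
planes with normal `n`. -/
def supportSq (a : ι → ℝ) (n : EuclideanSpace ℝ ι) : ℝ := ∑ i, a i ^ 2 * n i ^ 2

def diagSq (a : ι → ℝ) (n : EuclideanSpace ℝ ι) : EuclideanSpace ℝ ι :=
  WithLp.toLp 2 fun i ↦ a i ^ 2 * n i

variable {a : ι → ℝ}

theorem form_zero : form a 0 = 0 := by
  simp [form]

theorem inner_diagSq_self (n : EuclideanSpace ℝ ι) : ⟪diagSq a n, n⟫ = supportSq a n := by
  simp only [diagSq, supportSq, PiLp.inner_apply, RCLike.inner_apply, conj_trivial]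
  exact Finset.sum_congr rfl fun i _ ↦ by ring

theorem supportSq_pos (ha : ∀ i, a i ≠ 0) {n : EuclideanSpace ℝ ι} (hn : n ≠ 0) :
    0 < supportSq a n := by
  obtain ⟨i, hi⟩ : ∃ i, n i ≠ 0 := by
    by_contra! h
    exact hn (by ext i; simp [h i])
  have := ha i
  exact Finset.sum_pos' (fun j _ ↦ by positivity) ⟨i, Finset.mem_univ _, by positivity⟩

theorem form_smul_diagSq_sub (ha : ∀ i, a i ≠ 0) (s : ℝ) (n v : EuclideanSpace ℝ ι) :
    form a (s • diagSq a n - v) = s ^ 2 * supportSq a n - 2 * s * ⟪v, n⟫ + form a v := by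
  have term : ∀ i, (s * (a i ^ 2 * n i) - v i) ^ 2 / a i ^ 2
      = s ^ 2 * (a i ^ 2 * n i ^ 2) - 2 * s * (n i * v i) + v i ^ 2 / a i ^ 2 := by
    intro i
    have := ha i
    field_simp
    ring
  simp only [form, supportSq, diagSq, PiLp.sub_apply, PiLp.smul_apply, smul_eq_mul,
    PiLp.inner_apply, RCLike.inner_apply, conj_trivial, term, Finset.sum_add_distrib,
    Finset.sum_sub_distrib, Finset.mul_sum]

theorem sq_eq_supportSq_of_existsUnique (ha : ∀ i, a i ≠ 0) {n : EuclideanSpace ℝ ι}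
    (hn : n ≠ 0) {d : ℝ} (h : ∃! v, form a v = 1 ∧ ⟪v, n⟫ = d) : d ^ 2 = supportSq a n := by
  obtain ⟨v, ⟨hv, hvn⟩, huniq⟩ := h
  obtain ⟨t, ht⟩ : ∃ t, t * supportSq a n = d :=
    ⟨d / supportSq a n, div_mul_cancel₀ d (supportSq_pos ha hn).ne'⟩
  have hreflect : form a ((2 * t) • diagSq a n - v) = 1 ∧ ⟪(2 * t) • diagSq a n - v, n⟫ = d := by
    constructor
    · rw [form_smul_diagSq_sub ha, hv, hvn]
      linear_combination 4 * t * ht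
    · rw [inner_sub_left, real_inner_smul_left, inner_diagSq_self, hvn]
      linear_combination 2 * ht
  have hv_eq : v = t • diagSq a n := by
    linear_combination (norm := module) (-(1 / 2 : ℝ)) • huniq _ hreflect
  have hform := form_smul_diagSq_sub ha t n 0
  rw [sub_zero, ← hv_eq, hv, inner_zero_left, form_zero] at hform
  linear_combination (-(t * supportSq a n + d)) * ht - supportSq a n * hform

theorem sum_supportSq_eq {κ : Type*} [Fintype κ] (b : OrthonormalBasis κ ℝ (EuclideanSpace ℝ ι)) :
    ∑ k, supportSq a (b k) = ∑ i, a i ^ 2 := by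
  classical
  have hcoord : ∀ i, ∑ k, b k i ^ 2 = 1 := fun i ↦ by
    simpa [EuclideanSpace.inner_single_left] using
      b.sum_sq_inner_left (EuclideanSpace.single i 1)
  simp only [supportSq, Finset.sum_comm (γ := κ), ← Finset.mul_sum, hcoord, mul_one]

theorem norm_sq_of_tangent_planes {κ : Type*} [Fintype κ] (ha : ∀ i, a i ≠ 0)
    (b : OrthonormalBasis κ ℝ (EuclideanSpace ℝ ι)) (d : κ → ℝ)
    (h : ∀ k, ∃! v, form a v = 1 ∧ ⟪v, b k⟫ = d k) :
    ‖∑ k, d k • b k‖ ^ 2 = ∑ i, a i ^ 2 := by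
  rw [b.norm_sum_smul_sq, ← sum_supportSq_eq b]
  exact Finset.sum_congr rfl fun k _ ↦
    sq_eq_supportSq_of_existsUnique ha (b.orthonormal.ne_zero k) (h k)

end Ellipsoid

/-- Monge–Hachette (the orthoptic/Monge sphere): if three mutually perpendicular planes
are each tangent to the ellipsoid `x²/a² + y²/b² + z²/c² = 1` (i.e. each meets it in
exactly one point), then their common point `m = d₁•n₁ + d₂•n₂ + d₃•n₃` satisfies
`‖m‖² = a² + b² + c²`. -/
theorem monge_sphere (a b c : ℝ) (ha : 0 < a) (hb : 0 < b) (hc : 0 < c)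
    (n₁ n₂ n₃ : EuclideanSpace ℝ (Fin 3)) (hn : Orthonormal ℝ ![n₁, n₂, n₃])
    (d₁ d₂ d₃ : ℝ)
    (h₁ : ∃! v : EuclideanSpace ℝ (Fin 3),
      (v 0) ^ 2 / a ^ 2 + (v 1) ^ 2 / b ^ 2 + (v 2) ^ 2 / c ^ 2 = 1 ∧ ⟪v, n₁⟫ = d₁)
    (h₂ : ∃! v : EuclideanSpace ℝ (Fin 3),
      (v 0) ^ 2 / a ^ 2 + (v 1) ^ 2 / b ^ 2 + (v 2) ^ 2 / c ^ 2 = 1 ∧ ⟪v, n₂⟫ = d₂)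
    (h₃ : ∃! v : EuclideanSpace ℝ (Fin 3),
      (v 0) ^ 2 / a ^ 2 + (v 1) ^ 2 / b ^ 2 + (v 2) ^ 2 / c ^ 2 = 1 ∧ ⟪v, n₃⟫ = d₃) :
    ‖d₁ • n₁ + d₂ • n₂ + d₃ • n₃‖ ^ 2 = a ^ 2 + b ^ 2 + c ^ 2 := by
  let B : OrthonormalBasis (Fin 3) ℝ (EuclideanSpace ℝ (Fin 3)) :=
    .mk hn (hn.linearIndependent.span_eq_top_of_card_eq_finrank (by simp)).ge
  have haxes : ∀ i, ![a, b, c] i ≠ 0 := by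
    intro i
    fin_cases i <;> simp [ha.ne', hb.ne', hc.ne']
  have htangent : ∀ k, ∃! v, Ellipsoid.form ![a, b, c] v = 1 ∧ ⟪v, B k⟫ = ![d₁, d₂, d₃] k := by
    intro k
    fin_cases k <;> simpa [B, Ellipsoid.form, Fin.sum_univ_three]
  simpa [B, Fin.sum_univ_three, ← add_assoc] using
    Ellipsoid.norm_sq_of_tangent_planes haxes B _ htangent
end
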